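/- Let U be a valid position for P, let S be the set of semi-universal labels in U, let U' be the successor of U with respect to S, and let W₁, …, W_p be the label sets of the connected components of H_P(U'). Then U'|W_j is a valid position for every j. -/

import Mathlib

open Function Set

/-- A finite rooted tree on a vertex type `V`, presented by its parent function:
the root is a fixed point of `parent`, and every vertex reaches the root by
iterating `parent`. -/
structure ParentTree (V : Type*) where
  root : V
  parent : V → V
  parent_root : parent root = root
  reaches_root : ∀ v : V, ∃ n : ℕ, parent^[n] v = root

namespace ParentTree

variable {V : Type*}

/-- `u ≤_T v`: `u` lies on the path from `v` to the root `r(T)`. -/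
def anc (t : ParentTree V) (u v : V) : Prop := ∃ n : ℕ, t.parent^[n] v = u

/-- The set of children of a vertex. -/
def children (t : ParentTree V) (v : V) : Set V := {u | u ≠ v ∧ t.parent u = v}

/-- Undirected adjacency in the underlying tree. -/
def adj (t : ParentTree V) (u v : V) : Prop :=
  u ≠ v ∧ (t.parent u = v ∨ t.parent v = u)

/-- The degree of a vertex in the underlying undirected tree: the number of its
neighbors (its children, plus its parent when it is not the root). -/
noncomputable def degree (t : ParentTree V) (v : V) : ℕ :=
  {u : V | t.adj u v}.ncard

end ParentTree

/-- A semi-labeled tree `(T, φ)`: a rooted tree together with a label set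
`labels ⊆ L` and a labeling map `lab` (the map `φ`), such that every node with
at most one child (equivalently, in the rooted setting, every node of small
degree that would be suppressible) carries at least one label.  This is the
rooted form of the requirement that every node of degree at most two is in the
image of `φ`. -/
structure SemiLabeledTree (L V : Type*) extends ParentTree V where
  labels : Set L
  lab : L → V
  labeled_of_few_children :
    ∀ v : V, (ParentTree.children toParentTree v).ncard ≤ 1 → ∃ ℓ ∈ labels, lab ℓ = v

namespace SemiLabeledTree

variable {L V : Type*}

/-- The set `φ⁻¹(v)` of labels of a node `v`. -/
def labelsOf (T : SemiLabeledTree L V) (v : V) : Set L := {ℓ ∈ T.labels | T.lab ℓ = v}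

/-- Every node is labeled. -/
def FullyLabeled (T : SemiLabeledTree L V) : Prop := ∀ v : V, ∃ ℓ ∈ T.labels, T.lab ℓ = v

/-- Every node has at most one label. -/
def SingularlyLabeled (T : SemiLabeledTree L V) : Prop :=
  ∀ ℓ ∈ T.labels, ∀ ℓ' ∈ T.labels, T.lab ℓ = T.lab ℓ' → ℓ = ℓ'

/-- `ℓ ≤_T ℓ'`: the node of `ℓ` is an ancestor of the node of `ℓ'`. -/
def labelLe (T : SemiLabeledTree L V) (ℓ ℓ' : L) : Prop :=
  T.toParentTree.anc (T.lab ℓ) (T.lab ℓ')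

/-- `ℓ <_T ℓ'`: the node of `ℓ` is a proper ancestor of the node of `ℓ'`. -/
def labelLt (T : SemiLabeledTree L V) (ℓ ℓ' : L) : Prop :=
  T.labelLe ℓ ℓ' ∧ T.lab ℓ ≠ T.lab ℓ'

/-- `ℓ ∥_T ℓ'`: the nodes of `ℓ` and `ℓ'` are incomparable. -/
def labelPar (T : SemiLabeledTree L V) (ℓ ℓ' : L) : Prop :=
  ¬ T.labelLe ℓ ℓ' ∧ ¬ T.labelLe ℓ' ℓ

/-- The cluster `X(u)`: all labels carried by descendants of `u`. -/
def cluster (T : SemiLabeledTree L V) (u : V) : Set L :=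
  {ℓ ∈ T.labels | T.toParentTree.anc u (T.lab ℓ)}

/-- The set of clusters `Cl(T)`. -/
def Cl (T : SemiLabeledTree L V) : Set (Set L) := {X | ∃ u : V, X = T.cluster u}

/-- `D(T)`: ordered pairs of labels in strict ancestor relation. -/
def Dset (T : SemiLabeledTree L V) : Set (L × L) :=
  {p | p.1 ∈ T.labels ∧ p.2 ∈ T.labels ∧ T.labelLt p.1 p.2}

/-- `N(T)`: unordered pairs of incomparable labels. -/
def Nset (T : SemiLabeledTree L V) : Set (Sym2 L) :=
  {z | ∃ ℓ ℓ' : L, z = Sym2.mk ℓ ℓ' ∧ ℓ ∈ T.labels ∧ ℓ' ∈ T.labels ∧ T.labelPar ℓ ℓ'}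

end SemiLabeledTree

/-- The cluster set of the restriction `T|A`:
`{ X ∩ A : X ∈ C, X ∩ A ≠ ∅ }`. -/
def restrictCl {L : Type*} (C : Set (Set L)) (A : Set L) : Set (Set L) :=
  {Y | ∃ X ∈ C, Y = X ∩ A ∧ Y.Nonempty}

/-- `T` ancestrally displays `T'`: `Cl(T') ⊆ Cl(T | L(T'))`. -/
def Displays {L V W : Type*} (T : SemiLabeledTree L V) (T' : SemiLabeledTree L W) : Prop :=
  T'.Cl ⊆ restrictCl T.Cl T'.labels

section Profile

variable {L V : Type*} {k : ℕ}

/-- The label set `L(P)` of a profile. -/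
def LP (P : Fin k → SemiLabeledTree L V) : Set L := ⋃ i, (P i).labels

/-- `P` is ancestrally compatible: some semi-labeled tree on the label set
`L(P)` ancestrally displays every tree of the profile. -/
def AncCompat (P : Fin k → SemiLabeledTree L V) : Prop :=
  ∃ (W : Type) (_ : Fintype W) (T : SemiLabeledTree L W),
    T.labels = LP P ∧ ∀ i, Displays T (P i)

/-- The restricted profile `P|X` is ancestrally compatible: some semi-labeled
tree on label set `L(P) ∩ X` ancestrally displays each restriction
`Tᵢ|(X ∩ L(Tᵢ))` (displaying is expressed via cluster sets, since the
restriction is determined by its cluster set). -/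
def AncCompatOn (P : Fin k → SemiLabeledTree L V) (X : Set L) : Prop :=
  ∃ (W : Type) (_ : Fintype W) (T : SemiLabeledTree L W),
    T.labels = LP P ∩ X ∧
    ∀ i, restrictCl (P i).Cl (X ∩ (P i).labels) ⊆ restrictCl T.Cl (X ∩ (P i).labels)

/-- `Desc_i(U)`: labels of `Tᵢ` descending from some member of `U(i)`. -/
def Desci (P : Fin k → SemiLabeledTree L V) (U : Fin k → Set L) (i : Fin k) : Set L :=
  {ℓ ∈ (P i).labels | ∃ ℓ' ∈ U i, (P i).labelLe ℓ' ℓ}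

/-- `Desc_P(U) = ⋃ i, Desc_i(U)`. -/
def DescP (P : Fin k → SemiLabeledTree L V) (U : Fin k → Set L) : Set L :=
  ⋃ i, Desci P U i

/-- A valid position: each `U(i) ⊆ L(Tᵢ)`; (V1) if `|U(i)| ≥ 2` then the
elements of `U(i)` are siblings in `Tᵢ` (children of a common node `p`);
(V2) `Desc_i(U) = Desc_P(U) ∩ L(Tᵢ)`. -/
def ValidPos (P : Fin k → SemiLabeledTree L V) (U : Fin k → Set L) : Prop :=
  (∀ i, U i ⊆ (P i).labels) ∧
  (∀ i, (∃ a ∈ U i, ∃ b ∈ U i, a ≠ b) →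
    ∃ p : V, ∀ a ∈ U i, (P i).lab a ≠ p ∧ (P i).parent ((P i).lab a) = p) ∧
  (∀ i, Desci P U i = DescP P U ∩ (P i).labels)

/-- `ℓ` is semi-universal in `U`: `ℓ` occurs in `U`, and `U(i) = {ℓ}` for every
`i` with `ℓ ∈ L(Tᵢ)`. -/
def SemiUniversal (P : Fin k → SemiLabeledTree L V) (U : Fin k → Set L) (ℓ : L) : Prop :=
  (∃ i, ℓ ∈ U i) ∧ ∀ i, ℓ ∈ (P i).labels → U i = {ℓ}

/-- `Ch_i(ℓ)`: the labels of the children of (the node of) `ℓ` in `Tᵢ`. -/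
def ChL (P : Fin k → SemiLabeledTree L V) (i : Fin k) (ℓ : L) : Set L :=
  {m ∈ (P i).labels |
    (P i).lab m ≠ (P i).lab ℓ ∧ (P i).parent ((P i).lab m) = (P i).lab ℓ}

/-- The successor of `U` with respect to `S`: if `U(i) = {ℓ}` for some `ℓ ∈ S`
then `U'(i) = Ch_i(ℓ)`, otherwise `U'(i) = U(i)`. -/
def Succ (P : Fin k → SemiLabeledTree L V) (U : Fin k → Set L) (S : Set L) :
    Fin k → Set L := fun i =>
  {m | (∃ ℓ ∈ S, U i = {ℓ} ∧ m ∈ ChL P i ℓ) ∨ ((¬ ∃ ℓ ∈ S, U i = {ℓ}) ∧ m ∈ U i)}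

/-- Adjacency in the display graph `H_P`: labels `ℓ, m` are adjacent when in
some input tree the node of one is the parent of the node of the other. -/
def dgAdj (P : Fin k → SemiLabeledTree L V) (ℓ m : L) : Prop :=
  ∃ i, ℓ ∈ (P i).labels ∧ m ∈ (P i).labels ∧
    (((P i).parent ((P i).lab m) = (P i).lab ℓ ∧ (P i).lab m ≠ (P i).lab ℓ) ∨
     ((P i).parent ((P i).lab ℓ) = (P i).lab m ∧ (P i).lab ℓ ≠ (P i).lab m))

/-- Adjacency in the subgraph of `H_P` induced by `X`. -/
def dgAdjOn (P : Fin k → SemiLabeledTree L V) (X : Set L) (ℓ m : L) : Prop :=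
  ℓ ∈ X ∧ m ∈ X ∧ dgAdj P ℓ m

/-- Reachability (connectivity) in the subgraph of `H_P` induced by `X`. -/
def dgReach (P : Fin k → SemiLabeledTree L V) (X : Set L) : L → L → Prop :=
  Relation.ReflTransGen (dgAdjOn P X)

/-- `W 0, …, W (p-1)` are (the label sets of) the connected components of the
subgraph of the display graph `H_P` induced by `X`: they are nonempty subsets
of `X` partitioning `X`, and two labels lie in a common `W j` iff they are
connected in the induced subgraph. -/
def IsComponents (P : Fin k → SemiLabeledTree L V) (X : Set L) {p : ℕ}
    (W : Fin p → Set L) : Prop :=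
  (∀ j, (W j).Nonempty) ∧ (∀ j, W j ⊆ X) ∧
  (∀ ℓ ∈ X, ∃! j, ℓ ∈ W j) ∧
  (∀ ℓ m : L, (∃ j, ℓ ∈ W j ∧ m ∈ W j) ↔ (ℓ ∈ X ∧ m ∈ X ∧ dgReach P X ℓ m))

end Profile

/-! Passing from a semi-universal label `ℓ` to its children removes exactly `ℓ` from the
descendant sets, because in a fully and singularly labeled tree the labels strictly below
`ℓ` are those weakly below a child of `ℓ`; so `U'` is again a valid position. Every label
below a member `ℓ'` of `U'(i)` is joined to `ℓ'` by a path of `Tᵢ` that stays inside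
`Desc_P(U')`, hence lies in the component of `ℓ'`. Restricting `U'` to a component `W_j`
therefore cuts both `Desc_i(U')` and `Desc_P(U')` down by `W_j`, which preserves (V2). -/

namespace ParentTree

variable {V : Type*} (t : ParentTree V)

theorem anc_refl (v : V) : t.anc v v := ⟨0, rfl⟩

theorem anc_parent (v : V) : t.anc (t.parent v) v := ⟨1, rfl⟩

theorem anc_trans {u v w : V} (huv : t.anc u v) (hvw : t.anc v w) : t.anc u w := by
  obtain ⟨m, rfl⟩ := huv
  obtain ⟨n, rfl⟩ := hvw
  exact ⟨m + n, iterate_add_apply _ _ _ _⟩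

theorem eq_root_of_isPeriodicPt {q : ℕ} {v : V} (hq : 0 < q)
    (hv : IsPeriodicPt t.parent q v) : v = t.root := by
  obtain ⟨N, hN⟩ := t.reaches_root v
  have h := (hv.mul_const N).eq
  rw [← Nat.sub_add_cancel (Nat.le_mul_of_pos_left N hq), iterate_add_apply, hN,
    iterate_fixed t.parent_root] at h
  exact h.symm

theorem anc_antisymm {u v : V} (huv : t.anc u v) (hvu : t.anc v u) : u = v := by
  obtain ⟨n, hn⟩ := huv
  obtain ⟨m, hm⟩ := hvu
  rcases Nat.eq_zero_or_pos n with rfl | hn_pos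
  · exact hn.symm
  have hv : v = t.root := t.eq_root_of_isPeriodicPt (q := m + n) (by omega) <| by
    rw [IsPeriodicPt, IsFixedPt, iterate_add_apply, hn, hm]
  rw [← hn, hv, iterate_fixed t.parent_root]

theorem exists_mem_children_anc {u v : V} (huv : t.anc u v) (hne : v ≠ u) :
    ∃ w ∈ t.children u, t.anc w v := by
  obtain ⟨n, hn⟩ := huv
  induction n generalizing v with
  | zero => exact absurd hn hne
  | succ n ih =>
    rw [iterate_succ_apply] at hn
    by_cases hpar : t.parent v = u
    · exact ⟨v, ⟨hne, hpar⟩, t.anc_refl v⟩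
    · obtain ⟨w, hw, hwv⟩ := ih hpar hn
      exact ⟨w, hw, t.anc_trans hwv (t.anc_parent v)⟩

theorem anc_and_ne_of_mem_children {u v w : V} (hw : w ∈ t.children u) (hwv : t.anc w v) :
    t.anc u v ∧ v ≠ u := by
  have huw : t.anc u w := hw.2 ▸ t.anc_parent w
  refine ⟨t.anc_trans huw hwv, ?_⟩
  rintro rfl
  exact hw.1 (t.anc_antisymm hwv huw)

end ParentTree

section Profile

variable {L V : Type*} {k p : ℕ} (P : Fin k → SemiLabeledTree L V)

theorem exists_mem_chL_labelLe_iff {i : Fin k} (hfull : (P i).FullyLabeled)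
    (hsing : (P i).SingularlyLabeled) {ℓ₀ ℓ : L} (hℓ₀ : ℓ₀ ∈ (P i).labels)
    (hℓ : ℓ ∈ (P i).labels) :
    (∃ m ∈ ChL P i ℓ₀, (P i).labelLe m ℓ) ↔ (P i).labelLe ℓ₀ ℓ ∧ ℓ ≠ ℓ₀ := by
  constructor
  · rintro ⟨m, ⟨-, hne, hpar⟩, hm⟩
    obtain ⟨hle, hlab⟩ := (P i).anc_and_ne_of_mem_children ⟨hne, hpar⟩ hm
    exact ⟨hle, fun h => hlab (h ▸ rfl)⟩
  · rintro ⟨hle, hne⟩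
    obtain ⟨w, ⟨hw, hpar⟩, hwℓ⟩ :=
      (P i).exists_mem_children_anc hle fun h => hne (hsing ℓ hℓ ℓ₀ hℓ₀ h)
    obtain ⟨m, hm, rfl⟩ := hfull w
    exact ⟨m, ⟨hm, hw, hpar⟩, hwℓ⟩

variable {P}

theorem succ_of_eq_singleton {U : Fin k → Set L} {S : Set L} {i : Fin k} {ℓ₀ : L}
    (hℓ₀ : ℓ₀ ∈ S) (hU : U i = {ℓ₀}) : Succ P U S i = ChL P i ℓ₀ := by
  ext m
  constructor
  · rintro (⟨ℓ, -, hUℓ, hm⟩ | ⟨hno, -⟩)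
    · rwa [singleton_eq_singleton_iff.1 (hU.symm.trans hUℓ)]
    · exact absurd ⟨ℓ₀, hℓ₀, hU⟩ hno
  · exact fun hm => Or.inl ⟨ℓ₀, hℓ₀, hU, hm⟩

theorem succ_of_not_exists {U : Fin k → Set L} {S : Set L} {i : Fin k}
    (h : ¬ ∃ ℓ ∈ S, U i = {ℓ}) : Succ P U S i = U i := by
  ext m
  constructor
  · rintro (⟨ℓ, hℓ, hUℓ, -⟩ | ⟨-, hm⟩)
    · exact absurd ⟨ℓ, hℓ, hUℓ⟩ h
    · exact hm
  · exact fun hm => Or.inr ⟨h, hm⟩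

theorem desci_succ (hfull : ∀ i, (P i).FullyLabeled) (hsing : ∀ i, (P i).SingularlyLabeled)
    {U : Fin k → Set L} (hU : ∀ i, U i ⊆ (P i).labels) {S : Set L}
    (hS : ∀ ℓ ∈ S, ∀ i, ℓ ∈ (P i).labels → U i = {ℓ}) (i : Fin k) :
    Desci P (Succ P U S) i = Desci P U i \ S := by
  by_cases h : ∃ ℓ₀ ∈ S, U i = {ℓ₀}
  · obtain ⟨ℓ₀, hℓ₀S, hUi⟩ := h
    have hℓ₀ : ℓ₀ ∈ (P i).labels := hU i (hUi ▸ rfl)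
    have hS_iff : ∀ ℓ ∈ (P i).labels, ℓ ∈ S ↔ ℓ = ℓ₀ := fun ℓ hℓ =>
      ⟨fun h => singleton_eq_singleton_iff.1 ((hS ℓ h i hℓ).symm.trans hUi), fun h => h ▸ hℓ₀S⟩
    ext ℓ
    simp only [Desci, succ_of_eq_singleton hℓ₀S hUi, hUi, mem_sdiff, mem_ofPred_eq,
      mem_singleton_iff, exists_eq_left]
    constructor
    · rintro ⟨hℓ, hdesc⟩
      obtain ⟨hle, hne⟩ := (exists_mem_chL_labelLe_iff P (hfull i) (hsing i) hℓ₀ hℓ).1 hdesc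
      exact ⟨⟨hℓ, hle⟩, fun h => hne ((hS_iff ℓ hℓ).1 h)⟩
    · rintro ⟨⟨hℓ, hle⟩, hnS⟩
      exact ⟨hℓ, (exists_mem_chL_labelLe_iff P (hfull i) (hsing i) hℓ₀ hℓ).2
        ⟨hle, fun h => hnS ((hS_iff ℓ hℓ).2 h)⟩⟩
  · unfold Desci
    rw [succ_of_not_exists h]
    ext ℓ
    exact ⟨fun hℓ => ⟨hℓ, fun hℓS => h ⟨ℓ, hℓS, hS ℓ hℓS i hℓ.1⟩⟩, fun hℓ => hℓ.1⟩

theorem descP_succ (hfull : ∀ i, (P i).FullyLabeled) (hsing : ∀ i, (P i).SingularlyLabeled)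
    {U : Fin k → Set L} (hU : ∀ i, U i ⊆ (P i).labels) {S : Set L}
    (hS : ∀ ℓ ∈ S, ∀ i, ℓ ∈ (P i).labels → U i = {ℓ}) :
    DescP P (Succ P U S) = DescP P U \ S := by
  simp only [DescP, desci_succ hfull hsing hU hS, iUnion_sdiff]

theorem ValidPos.succ (hfull : ∀ i, (P i).FullyLabeled) (hsing : ∀ i, (P i).SingularlyLabeled)
    {U : Fin k → Set L} (hU : ValidPos P U) {S : Set L}
    (hS : ∀ ℓ ∈ S, ∀ i, ℓ ∈ (P i).labels → U i = {ℓ}) :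
    ValidPos P (Succ P U S) := by
  obtain ⟨hsub, hsib, hdesc⟩ := hU
  refine ⟨fun i => ?_, fun i => ?_, fun i => ?_⟩
  · by_cases h : ∃ ℓ₀ ∈ S, U i = {ℓ₀}
    · obtain ⟨ℓ₀, hℓ₀, hUi⟩ := h
      rw [succ_of_eq_singleton hℓ₀ hUi]
      exact fun m hm => hm.1
    · rw [succ_of_not_exists h]
      exact hsub i
  · by_cases h : ∃ ℓ₀ ∈ S, U i = {ℓ₀}
    · obtain ⟨ℓ₀, hℓ₀, hUi⟩ := h
      rw [succ_of_eq_singleton hℓ₀ hUi]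
      exact fun _ => ⟨(P i).lab ℓ₀, fun m hm => hm.2⟩
    · rw [succ_of_not_exists h]
      exact hsib i
  · rw [desci_succ hfull hsing hsub hS, descP_succ hfull hsing hsub hS, hdesc i,
      inter_sdiff_right_comm]

theorem IsComponents.mem_iff_of_dgReach {X : Set L} {W : Fin p → Set L}
    (hW : IsComponents P X W) {ℓ m : L} (hℓ : ℓ ∈ X) (hm : m ∈ X) (h : dgReach P X ℓ m)
    (j : Fin p) : ℓ ∈ W j ↔ m ∈ W j := by
  obtain ⟨j', hℓj', hmj'⟩ := (hW.2.2.2 ℓ m).2 ⟨hℓ, hm, h⟩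
  exact ⟨fun hj => (hW.2.2.1 ℓ hℓ).unique hj hℓj' ▸ hmj',
    fun hj => (hW.2.2.1 m hm).unique hj hmj' ▸ hℓj'⟩

theorem mem_descP_of_labelLe {X : Fin k → Set L} {i : Fin k} {ℓ' ℓ : L} (hℓ' : ℓ' ∈ X i)
    (hℓ : ℓ ∈ (P i).labels) (hle : (P i).labelLe ℓ' ℓ) : ℓ ∈ DescP P X :=
  mem_iUnion.2 ⟨i, hℓ, ℓ', hℓ', hle⟩

theorem dgReach_descP_of_labelLe (hfull : ∀ i, (P i).FullyLabeled)
    (hsing : ∀ i, (P i).SingularlyLabeled) {X : Fin k → Set L}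
    (hX : ∀ i, X i ⊆ (P i).labels) {i : Fin k} {ℓ' ℓ : L} (hℓ' : ℓ' ∈ X i)
    (hℓ : ℓ ∈ (P i).labels) (hle : (P i).labelLe ℓ' ℓ) : dgReach P (DescP P X) ℓ' ℓ := by
  obtain ⟨n, hn⟩ := hle
  induction n generalizing ℓ with
  | zero =>
    obtain rfl : ℓ = ℓ' := hsing i ℓ hℓ ℓ' (hX i hℓ') hn
    exact Relation.ReflTransGen.refl
  | succ n ih =>
    rw [iterate_succ_apply] at hn
    by_cases hroot : (P i).parent ((P i).lab ℓ) = (P i).lab ℓ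
    · exact ih hℓ (hroot ▸ hn)
    obtain ⟨m, hm, hmℓ⟩ := hfull i ((P i).parent ((P i).lab ℓ))
    refine (ih hm (hmℓ ▸ hn)).tail
      ⟨mem_descP_of_labelLe hℓ' hm ⟨n, hmℓ ▸ hn⟩,
        mem_descP_of_labelLe hℓ' hℓ ⟨n + 1, by rwa [iterate_succ_apply]⟩,
        i, hm, hℓ, Or.inl ⟨hmℓ.symm, fun h => hroot (h.trans hmℓ).symm⟩⟩

theorem desci_inter_component (hfull : ∀ i, (P i).FullyLabeled)
    (hsing : ∀ i, (P i).SingularlyLabeled) {X : Fin k → Set L}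
    (hX : ∀ i, X i ⊆ (P i).labels) {W : Fin p → Set L} (hW : IsComponents P (DescP P X) W)
    (i : Fin k) (j : Fin p) :
    Desci P (fun i => X i ∩ W j) i = Desci P X i ∩ W j := by
  have hcomp : ∀ {ℓ' ℓ}, ℓ' ∈ X i → ℓ ∈ (P i).labels → (P i).labelLe ℓ' ℓ →
      (ℓ' ∈ W j ↔ ℓ ∈ W j) := fun hℓ' hℓ hle =>
    hW.mem_iff_of_dgReach (mem_descP_of_labelLe hℓ' (hX i hℓ') ((P i).anc_refl _))
      (mem_descP_of_labelLe hℓ' hℓ hle) (dgReach_descP_of_labelLe hfull hsing hX hℓ' hℓ hle) j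
  ext ℓ
  constructor
  · rintro ⟨hℓ, ℓ', ⟨hℓ'X, hℓ'W⟩, hle⟩
    exact ⟨⟨hℓ, ℓ', hℓ'X, hle⟩, (hcomp hℓ'X hℓ hle).1 hℓ'W⟩
  · rintro ⟨⟨hℓ, ℓ', hℓ'X, hle⟩, hℓW⟩
    exact ⟨hℓ, ℓ', ⟨hℓ'X, (hcomp hℓ'X hℓ hle).2 hℓW⟩, hle⟩

theorem ValidPos.inter_component (hfull : ∀ i, (P i).FullyLabeled)
    (hsing : ∀ i, (P i).SingularlyLabeled) {X : Fin k → Set L} (hX : ValidPos P X)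
    {W : Fin p → Set L} (hW : IsComponents P (DescP P X) W) (j : Fin p) :
    ValidPos P (fun i => X i ∩ W j) := by
  obtain ⟨hsub, hsib, hdesc⟩ := hX
  have hdescP : DescP P (fun i => X i ∩ W j) = DescP P X ∩ W j := by
    simp only [DescP, desci_inter_component hfull hsing hsub hW, iUnion_inter]
  refine ⟨fun i => inter_subset_left.trans (hsub i), fun i ⟨a, ha, b, hb, hab⟩ => ?_,
    fun i => ?_⟩
  · exact (hsib i ⟨a, ha.1, b, hb.1, hab⟩).imp fun _ hq c hc => hq c hc.1
  · rw [desci_inter_component hfull hsing hsub hW, hdescP, hdesc i, inter_right_comm]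

end Profile

theorem stmt15_general {L V : Type*} {k p : ℕ}
    (P : Fin k → SemiLabeledTree L V)
    (hfull : ∀ i, (P i).FullyLabeled) (hsing : ∀ i, (P i).SingularlyLabeled)
    (U : Fin k → Set L) (hvalid : ValidPos P U)
    (S : Set L) (hS : S = {ℓ : L | SemiUniversal P U ℓ})
    (U' : Fin k → Set L) (hU' : U' = Succ P U S)
    (W : Fin p → Set L) (hW : IsComponents P (DescP P U') W) :
    ∀ j, ValidPos P (fun i => U' i ∩ W j) := by
  have hS_semiUniversal : ∀ ℓ ∈ S, ∀ i, ℓ ∈ (P i).labels → U i = {ℓ} := by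
    rw [hS]
    exact fun ℓ hℓ => hℓ.2
  have hvalid' : ValidPos P U' := hU' ▸ hvalid.succ hfull hsing hS_semiUniversal
  exact hvalid'.inter_component hfull hsing hW

/-- Let `U` be a valid position, `S` the set of
semi-universal labels in `U`, `U'` the successor of `U` with respect to `S`,
and `W₁, …, W_p` the label sets of the connected components of `H_P(U')`.
Then `U'|W_j` is a valid position for every `j`. -/
theorem stmt15 {L V : Type*} [Fintype V] {k p : ℕ}
    (P : Fin k → SemiLabeledTree L V)
    (hfull : ∀ i, (P i).FullyLabeled) (hsing : ∀ i, (P i).SingularlyLabeled)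
    (U : Fin k → Set L) (hvalid : ValidPos P U)
    (S : Set L) (hS : S = {ℓ : L | SemiUniversal P U ℓ})
    (U' : Fin k → Set L) (hU' : U' = Succ P U S)
    (W : Fin p → Set L) (hW : IsComponents P (DescP P U') W) :
    ∀ j, ValidPos P (fun i => U' i ∩ W j) :=
  stmt15_general P hfull hsing U hvalid S hS U' hU' W hW
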